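/- arXiv:2202.03012 — 3 statements merged into one kernel-verified Lean document; each statement's English description precedes it below -/
import Mathlib

section
/- Integral bound on the velocity of the zeroth consensus error: Let D ∈ ℝ^{n×ℓ}, m ≥ 1, δ > 0, and let Λ_0 ∈ ℝ^{ℓ×ℓ} be a diagonal matrix with positive diagonal entries and largest diagonal entry s_Λ. Suppose σ_0 : [t_0, t_0+δ] → ℝ^ℓ is differentiable, σ_1 : [t_0, t_0+δ] → ℝ^ℓ is continuous, σ̇_0(t) = σ_1(t) − Λ_0 ⌈DᵀD σ_0(t)⌋^{m/(m+1)} for all t ∈ [t_0, t_0+δ], and ‖σ_0(t)‖ ≤ Ω̄_0 and ‖σ_1(t)‖ ≤ Ω̄_1 on [t_0, t_0+δ]. Then ∫_{t_0}^{t_0+δ} ‖σ̇_0(t)‖ dt ≤ ( ℓ^{1/(2m+2)} s_Λ (s_max(DᵀD))^{m/(m+1)} Ω̄_0^{m/(m+1)} + Ω̄_1 ) δ. -/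
open Matrix Finset

/-- Signed power: `⌈x⌋^α = |x|^α sign(x)`. -/
noncomputable def spow (α x : ℝ) : ℝ := |x| ^ α * Real.sign x

/-- Euclidean norm of a vector in `ℝ^k`. -/
noncomputable def vecNorm {k : ℕ} (x : Fin k → ℝ) : ℝ := Real.sqrt (∑ i, x i ^ 2)

/-- Largest singular value of a matrix, i.e. its `ℓ²`-operator norm:
the supremum of `‖A x‖` over unit vectors `x`. -/
noncomputable def sMax {n l : ℕ} (A : Matrix (Fin n) (Fin l) ℝ) : ℝ :=
  sSup {r : ℝ | ∃ x : Fin l → ℝ, vecNorm x = 1 ∧ r = vecNorm (A.mulVec x)}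

lemma vecNorm_nonneg {k : ℕ} (x : Fin k → ℝ) : 0 ≤ vecNorm x := Real.sqrt_nonneg _

lemma vecNorm_eq_norm {k : ℕ} (x : Fin k → ℝ) :
    vecNorm x = ‖(WithLp.equiv 2 (Fin k → ℝ)).symm x‖ := by
  rw [EuclideanSpace.norm_eq]
  simp [vecNorm, Real.norm_eq_abs, sq_abs]

lemma vecNorm_sub_le {k : ℕ} (a b : Fin k → ℝ) :
    vecNorm (a - b) ≤ vecNorm a + vecNorm b := by
  rw [vecNorm_eq_norm, vecNorm_eq_norm, vecNorm_eq_norm]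
  exact norm_sub_le _ _

lemma vecNorm_smul {k : ℕ} (c : ℝ) (x : Fin k → ℝ) :
    vecNorm (c • x) = |c| * vecNorm x := by
  rw [vecNorm_eq_norm, vecNorm_eq_norm]
  rw [show (WithLp.equiv 2 (Fin k → ℝ)).symm (c • x)
      = c • (WithLp.equiv 2 (Fin k → ℝ)).symm x from rfl]
  rw [norm_smul, Real.norm_eq_abs]

lemma vecNorm_mul_le {k : ℕ} (c : Fin k → ℝ) (s : ℝ) (hs0 : 0 ≤ s)
    (hs : ∀ e, |c e| ≤ s) (x : Fin k → ℝ) :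
    vecNorm (fun e => c e * x e) ≤ s * vecNorm x := by
  unfold vecNorm
  rw [← Real.sqrt_sq hs0, ← Real.sqrt_mul (sq_nonneg s)]
  apply Real.sqrt_le_sqrt
  rw [Finset.mul_sum]
  apply Finset.sum_le_sum
  intro i _
  have h1 : (c i) ^ 2 ≤ s ^ 2 := sq_le_sq' (by linarith [abs_nonneg (c i), (abs_le.mp (hs i)).1, neg_abs_le (c i)]) (le_trans (le_abs_self _) (hs i))
  calc (c i * x i) ^ 2 = c i ^ 2 * x i ^ 2 := by ring
    _ ≤ s ^ 2 * x i ^ 2 := by nlinarith [sq_nonneg (x i)]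


lemma sum_rpow_le {k : ℕ} (hk : 0 < k) (a : Fin k → ℝ) (ha : ∀ e, 0 ≤ a e)
    {α : ℝ} (hα : 0 < α) (hα1 : α ≤ 1) :
    ∑ e, a e ^ α ≤ (k : ℝ) ^ (1 - α) * (∑ e, a e) ^ α := by
  have hkpos : (0 : ℝ) < (k : ℝ) := by exact_mod_cast hk
  set w : Fin k → ℝ := fun _ => (k : ℝ)⁻¹ with hw
  have hw' : ∑ _i : Fin k, (k : ℝ)⁻¹ = 1 := by
    rw [Finset.sum_const, Finset.card_univ, Fintype.card_fin, nsmul_eq_mul]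
    field_simp
  have key := Real.arith_mean_le_rpow_mean (s := Finset.univ) w (fun e => a e ^ α)
      (fun i _ => by positivity) hw' (fun i _ => Real.rpow_nonneg (ha i) α)
      (p := 1 / α) (by rw [le_div_iff₀ hα]; linarith)
  have hpow : ∀ e : Fin k, (a e ^ α) ^ (1/α : ℝ) = a e := by
    intro e
    rw [← Real.rpow_mul (ha e), mul_one_div_cancel (ne_of_gt hα), Real.rpow_one]
  simp only [hpow] at key
  have h1 : ∑ e : Fin k, w e * a e ^ α = (k:ℝ)⁻¹ * ∑ e, a e ^ α := by
    rw [Finset.mul_sum]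
  have h2 : ∑ e : Fin k, w e * a e = (k:ℝ)⁻¹ * ∑ e, a e := by
    rw [Finset.mul_sum]
  rw [h1, h2] at key
  have h3 : ((k:ℝ)⁻¹ * ∑ e, a e) ^ (1/(1/α) : ℝ) = (k:ℝ)⁻¹ ^ α * (∑ e, a e) ^ α := by
    rw [one_div_one_div, Real.mul_rpow (by positivity) (Finset.sum_nonneg fun i _ => ha i)]
  rw [h3] at key
  have h4 : (k:ℝ)⁻¹ ^ (α:ℝ) = (k:ℝ) ^ (-α : ℝ) := by
    rw [Real.inv_rpow hkpos.le, ← Real.rpow_neg hkpos.le]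
  rw [h4] at key
  have h5 : (k:ℝ) ^ (1 - α : ℝ) = (k:ℝ) * (k:ℝ) ^ (-α : ℝ) := by
    rw [show (1 - α : ℝ) = 1 + (-α) by ring, Real.rpow_add hkpos, Real.rpow_one]
  rw [h5, mul_assoc]
  calc ∑ e, a e ^ α = (k:ℝ) * ((k:ℝ)⁻¹ * ∑ e, a e ^ α) := by field_simp
    _ ≤ (k:ℝ) * ((k:ℝ) ^ (-α:ℝ) * (∑ e, a e) ^ α) :=
        mul_le_mul_of_nonneg_left key hkpos.le

lemma vecNorm_spow_le {k : ℕ} (hk : 0 < k) (y : Fin k → ℝ)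
    {α : ℝ} (hα : 0 < α) (hα1 : α ≤ 1) :
    vecNorm (fun e => spow α (y e)) ≤ (k : ℝ) ^ ((1 - α)/2) * (vecNorm y) ^ α := by
  have hsum : (0:ℝ) ≤ ∑ e, y e ^ 2 := Finset.sum_nonneg fun i _ => sq_nonneg _
  have step1 : ∑ e, (spow α (y e)) ^ 2 ≤ ∑ e, (y e ^ 2) ^ α := by
    apply Finset.sum_le_sum
    intro i _
    unfold spow
    have habs : |y i| ^ (α:ℝ) * Real.sign (y i) * (|y i| ^ (α:ℝ) * Real.sign (y i))
        = (|y i| ^ (α:ℝ))^2 * (Real.sign (y i))^2 := by ring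
    rw [sq, habs]
    have h1 : (|y i| ^ (α:ℝ))^2 = (y i ^ 2) ^ α := by
      rw [← Real.rpow_natCast (|y i| ^ (α:ℝ)) 2, ← Real.rpow_mul (abs_nonneg _),
        mul_comm, Real.rpow_mul (abs_nonneg _), Real.rpow_natCast, sq_abs]
    rw [h1]
    have h2 : (Real.sign (y i))^2 ≤ 1 := by
      rcases Real.sign_apply_eq (y i) with h|h|h <;> rw [h] <;> norm_num
    nlinarith [Real.rpow_nonneg (sq_nonneg (y i)) α]
  have step2 : ∑ e, (y e ^ 2) ^ α ≤ (k:ℝ) ^ (1-α) * (∑ e, y e ^ 2) ^ α :=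
    sum_rpow_le hk _ (fun e => sq_nonneg _) hα hα1
  unfold vecNorm
  calc Real.sqrt (∑ e, (spow α (y e)) ^ 2)
      ≤ Real.sqrt ((k:ℝ) ^ (1-α) * (∑ e, y e ^ 2) ^ α) :=
        Real.sqrt_le_sqrt (le_trans step1 step2)
    _ = (k : ℝ) ^ ((1 - α)/2) * (Real.sqrt (∑ e, y e ^ 2)) ^ α := by
        rw [Real.sqrt_mul (Real.rpow_nonneg (Nat.cast_nonneg k) _)]
        congr 1
        · rw [Real.sqrt_eq_rpow, ← Real.rpow_mul (Nat.cast_nonneg k)]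
          ring_nf
        · rw [Real.sqrt_eq_rpow, Real.sqrt_eq_rpow,
            ← Real.rpow_mul hsum, ← Real.rpow_mul hsum, mul_comm]


lemma sMax_bddAbove {n l : ℕ} (A : Matrix (Fin n) (Fin l) ℝ) :
    BddAbove {r : ℝ | ∃ x : Fin l → ℝ, vecNorm x = 1 ∧ r = vecNorm (A.mulVec x)} := by
  refine ⟨Real.sqrt (∑ i, ∑ j, A i j ^ 2), ?_⟩
  rintro r ⟨x, hx, rfl⟩
  have hx2 : ∑ j, x j ^ 2 = 1 := by
    have := congrArg (fun t => t ^ 2) hx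
    simpa [vecNorm, Real.sq_sqrt (Finset.sum_nonneg fun i _ => sq_nonneg (x i))] using this
  unfold vecNorm
  apply Real.sqrt_le_sqrt
  apply Finset.sum_le_sum
  intro i _
  calc (A.mulVec x i) ^ 2 = (∑ j, A i j * x j) ^ 2 := by rfl
    _ ≤ (∑ j, A i j ^ 2) * ∑ j, x j ^ 2 := Finset.sum_mul_sq_le_sq_mul_sq _ _ _
    _ = ∑ j, A i j ^ 2 := by rw [hx2, mul_one]

lemma vecNorm_mulVec_le {n l : ℕ} (A : Matrix (Fin n) (Fin l) ℝ) (x : Fin l → ℝ) :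
    vecNorm (A.mulVec x) ≤ sMax A * vecNorm x := by
  by_cases hx : vecNorm x = 0
  · have hx0 : x = 0 := by
      funext j
      have h := hx
      unfold vecNorm at h
      have hs : ∑ i, x i ^ 2 = 0 :=
        le_antisymm (Real.sqrt_eq_zero'.mp h) (Finset.sum_nonneg fun i _ => sq_nonneg (x i))
      have := (Finset.sum_eq_zero_iff_of_nonneg (fun i _ => sq_nonneg (x i))).mp hs j (Finset.mem_univ j)
      exact pow_eq_zero_iff (n := 2) (by norm_num) |>.mp this
    rw [hx0]
    simp [vecNorm, Matrix.mulVec_zero]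
  · have hc : 0 < vecNorm x := lt_of_le_of_ne (vecNorm_nonneg x) (Ne.symm hx)
    set c := vecNorm x
    have hu : vecNorm (c⁻¹ • x) = 1 := by
      rw [vecNorm_smul, abs_of_pos (inv_pos.mpr hc)]
      field_simp
      rfl
    have hmem : vecNorm (A.mulVec (c⁻¹ • x)) ∈
        {r : ℝ | ∃ y : Fin l → ℝ, vecNorm y = 1 ∧ r = vecNorm (A.mulVec y)} :=
      ⟨c⁻¹ • x, hu, rfl⟩
    have hle : vecNorm (A.mulVec (c⁻¹ • x)) ≤ sMax A := le_csSup (sMax_bddAbove A) hmem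
    rw [Matrix.mulVec_smul, vecNorm_smul, abs_of_pos (inv_pos.mpr hc)] at hle
    calc vecNorm (A.mulVec x) = c * (c⁻¹ * vecNorm (A.mulVec x)) := by field_simp
      _ ≤ c * sMax A := mul_le_mul_of_nonneg_left hle hc.le
      _ = sMax A * c := mul_comm _ _

lemma sMax_nonneg {n l : ℕ} [NeZero l] (A : Matrix (Fin n) (Fin l) ℝ) : 0 ≤ sMax A := by
  obtain ⟨i0⟩ : Nonempty (Fin l) := ⟨⟨0, Nat.pos_of_ne_zero (NeZero.ne l)⟩⟩
  set x1 : Fin l → ℝ := fun j => if j = i0 then 1 else 0 with hx1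
  have hu : vecNorm x1 = 1 := by
    unfold vecNorm
    have h : ∑ i : Fin l, x1 i ^ 2 = 1 := by
      simp [hx1, apply_ite (fun r : ℝ => r ^ 2)]
    rw [h]
    exact Real.sqrt_one
  have hmem : vecNorm (A.mulVec x1) ∈
      {r : ℝ | ∃ y : Fin l → ℝ, vecNorm y = 1 ∧ r = vecNorm (A.mulVec y)} :=
    ⟨_, hu, rfl⟩
  exact le_trans (vecNorm_nonneg _) (le_csSup (sMax_bddAbove A) hmem)

lemma continuous_spow {α : ℝ} (hα : 0 < α) : Continuous (spow α) := by
  have habs : Continuous fun x : ℝ => |x| ^ (α:ℝ) := by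
    rw [continuous_iff_continuousAt]
    intro a
    exact (Real.continuousAt_rpow_const _ _ (Or.inr hα.le)).comp continuous_abs.continuousAt
  rw [continuous_iff_continuousAt]
  intro a
  rcases lt_trichotomy a 0 with h | h | h
  · have hev : ∀ᶠ x in nhds a, (fun x => |x| ^ (α:ℝ) * (-1)) x = spow α x := by
      filter_upwards [eventually_lt_nhds h] with x hx
      unfold spow
      rw [Real.sign_of_neg hx]
    exact ContinuousAt.congr (habs.continuousAt.mul continuousAt_const) hev
  · subst h
    have h0 : spow α 0 = 0 := by simp [spow, Real.sign_zero]
    unfold ContinuousAt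
    rw [h0]
    apply squeeze_zero_norm (a := fun x => |x| ^ (α:ℝ))
    · intro x
      rw [Real.norm_eq_abs, spow, abs_mul, abs_of_nonneg (Real.rpow_nonneg (abs_nonneg x) α)]
      rcases Real.sign_apply_eq x with hs|hs|hs <;> rw [hs] <;>
        simp [Real.rpow_nonneg (abs_nonneg x) α]
    · have := habs.continuousAt (x := 0)
      unfold ContinuousAt at this
      simpa [Real.zero_rpow (ne_of_gt hα)] using this
  · have hev : ∀ᶠ x in nhds a, (fun x => |x| ^ (α:ℝ) * 1) x = spow α x := by
      filter_upwards [eventually_gt_nhds h] with x hx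
      unfold spow
      rw [Real.sign_of_pos hx]
    exact ContinuousAt.congr (habs.continuousAt.mul continuousAt_const) hev

lemma continuous_vecNorm {k : ℕ} : Continuous (vecNorm : (Fin k → ℝ) → ℝ) := by
  unfold vecNorm
  exact Real.continuous_sqrt.comp (continuous_finset_sum _ fun i _ => (continuous_apply i).pow 2)

/-- Integral bound on the velocity of the zeroth consensus error. -/
theorem stmt2 {n l : ℕ} (D : Matrix (Fin n) (Fin l) ℝ) (m : ℕ) (hm : 1 ≤ m)
    (t0 δ : ℝ) (hδ : 0 < δ)
    (Λ : Fin l → ℝ) (hΛ : ∀ e, 0 < Λ e)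
    (sΛ : ℝ) (hsΛ : IsGreatest (Set.range Λ) sΛ)
    (Ω0 Ω1 : ℝ)
    (σ0 σ0' σ1 : ℝ → Fin l → ℝ)
    (hσ0 : ∀ t ∈ Set.Icc t0 (t0 + δ), HasDerivAt σ0 (σ0' t) t)
    (hσ1 : ContinuousOn σ1 (Set.Icc t0 (t0 + δ)))
    (heq : ∀ t ∈ Set.Icc t0 (t0 + δ),
      σ0' t = σ1 t - fun e => Λ e * spow ((m : ℝ) / ((m : ℝ) + 1)) (((Dᵀ * D).mulVec (σ0 t)) e))
    (hb0 : ∀ t ∈ Set.Icc t0 (t0 + δ), vecNorm (σ0 t) ≤ Ω0)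
    (hb1 : ∀ t ∈ Set.Icc t0 (t0 + δ), vecNorm (σ1 t) ≤ Ω1) :
    ∫ t in t0..(t0 + δ), vecNorm (σ0' t) ≤
      ((l : ℝ) ^ ((1 : ℝ) / (2 * (m : ℝ) + 2)) * sΛ *
          (sMax (Dᵀ * D)) ^ ((m : ℝ) / ((m : ℝ) + 1)) * Ω0 ^ ((m : ℝ) / ((m : ℝ) + 1)) + Ω1) * δ := by
  obtain ⟨e0, he0⟩ := hsΛ.1
  have hl : 0 < l := e0.pos
  haveI : NeZero l := ⟨hl.ne'⟩
  set α : ℝ := (m : ℝ) / ((m : ℝ) + 1) with hαdef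
  have hmpos : (0:ℝ) < (m:ℝ) := by exact_mod_cast hm
  have hα : 0 < α := div_pos hmpos (by linarith)
  have hα1 : α ≤ 1 := by
    rw [hαdef, div_le_one (by linarith)]; linarith
  have ht0 : t0 ∈ Set.Icc t0 (t0 + δ) := ⟨le_refl _, by linarith⟩
  have hΩ0 : 0 ≤ Ω0 := le_trans (vecNorm_nonneg _) (hb0 t0 ht0)
  have hΩ1 : 0 ≤ Ω1 := le_trans (vecNorm_nonneg _) (hb1 t0 ht0)
  have hsΛpos : 0 < sΛ := he0 ▸ hΛ e0
  have hsΛabs : ∀ e, |Λ e| ≤ sΛ := fun e => by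
    rw [abs_of_pos (hΛ e)]; exact hsΛ.2 ⟨e, rfl⟩
  set A : Matrix (Fin l) (Fin l) ℝ := Dᵀ * D with hAdef
  have hsM : 0 ≤ sMax A := sMax_nonneg A
  set C : ℝ := (l : ℝ) ^ ((1 : ℝ) / (2 * (m : ℝ) + 2)) * sΛ *
      (sMax A) ^ α * Ω0 ^ α + Ω1 with hCdef
  set g : ℝ → ℝ := fun t => vecNorm (σ1 t - fun e => Λ e * spow α (A.mulVec (σ0 t) e))
    with hgdef
  have hexp : ((1:ℝ) - α)/2 = (1:ℝ) / (2 * (m:ℝ) + 2) := by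
    rw [hαdef]; field_simp; ring
  have hpt : ∀ t ∈ Set.Icc t0 (t0 + δ), g t ≤ C := by
    intro t ht
    have h1 : g t ≤ vecNorm (σ1 t) + vecNorm (fun e => Λ e * spow α (A.mulVec (σ0 t) e)) :=
      vecNorm_sub_le _ _
    have h2 : vecNorm (fun e => Λ e * spow α (A.mulVec (σ0 t) e)) ≤
        sΛ * vecNorm (fun e => spow α (A.mulVec (σ0 t) e)) :=
      vecNorm_mul_le Λ sΛ hsΛpos.le hsΛabs _
    have h3 : vecNorm (fun e => spow α (A.mulVec (σ0 t) e)) ≤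
        (l : ℝ) ^ ((1 - α)/2) * (vecNorm (A.mulVec (σ0 t))) ^ α :=
      vecNorm_spow_le hl _ hα hα1
    have h4 : vecNorm (A.mulVec (σ0 t)) ≤ sMax A * Ω0 :=
      le_trans (vecNorm_mulVec_le A _)
        (mul_le_mul_of_nonneg_left (hb0 t ht) hsM)
    have h5 : (vecNorm (A.mulVec (σ0 t))) ^ α ≤ (sMax A) ^ α * Ω0 ^ α := by
      rw [← Real.mul_rpow hsM hΩ0]
      exact Real.rpow_le_rpow (vecNorm_nonneg _) h4 hα.le
    have hlpow : (0:ℝ) ≤ (l : ℝ) ^ (((1:ℝ) - α)/2) := Real.rpow_nonneg (Nat.cast_nonneg l) _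
    calc g t ≤ vecNorm (σ1 t) + vecNorm (fun e => Λ e * spow α (A.mulVec (σ0 t) e)) := h1
      _ ≤ Ω1 + sΛ * ((l : ℝ) ^ ((1 - α)/2) * (vecNorm (A.mulVec (σ0 t))) ^ α) := by
          have := le_trans h2 (mul_le_mul_of_nonneg_left h3 hsΛpos.le)
          exact add_le_add (hb1 t ht) this
      _ ≤ Ω1 + sΛ * ((l : ℝ) ^ ((1 - α)/2) * ((sMax A) ^ α * Ω0 ^ α)) := by
          have := mul_le_mul_of_nonneg_left h5 hlpow
          exact add_le_add_right (mul_le_mul_of_nonneg_left this hsΛpos.le) _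
      _ = C := by rw [hCdef, hexp]; ring
  have huIcc : Set.uIcc t0 (t0 + δ) = Set.Icc t0 (t0 + δ) := Set.uIcc_of_le (by linarith)
  have hσ0cont : ContinuousOn σ0 (Set.Icc t0 (t0 + δ)) :=
    fun t ht => ((hσ0 t ht).continuousAt).continuousWithinAt
  have hgcont : ContinuousOn g (Set.Icc t0 (t0 + δ)) := by
    apply continuous_vecNorm.comp_continuousOn
    apply ContinuousOn.sub hσ1
    apply continuousOn_pi.mpr
    intro e
    apply ContinuousOn.mul continuousOn_const
    apply (continuous_spow hα).comp_continuousOn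
    have : (fun t => A.mulVec (σ0 t) e) = fun t => ∑ j, A e j * σ0 t j := by
      funext t; rfl
    rw [this]
    exact continuousOn_finset_sum _ fun j _ =>
      (continuousOn_const.mul ((continuous_apply j).comp_continuousOn hσ0cont))
  have hcongr : (∫ t in t0..(t0 + δ), vecNorm (σ0' t)) = ∫ t in t0..(t0 + δ), g t := by
    apply intervalIntegral.integral_congr
    intro t ht
    rw [huIcc] at ht
    simp only [hgdef]
    rw [heq t ht]
  have hint : IntervalIntegrable g MeasureTheory.volume t0 (t0 + δ) :=
    (hgcont.mono (by rw [huIcc])).intervalIntegrable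
  have hintC : IntervalIntegrable (fun _ : ℝ => C) MeasureTheory.volume t0 (t0 + δ) :=
    intervalIntegrable_const
  have hmono := intervalIntegral.integral_mono_on (by linarith : t0 ≤ t0 + δ) hint hintC hpt
  rw [hcongr]
  calc (∫ t in t0..(t0 + δ), g t) ≤ ∫ _t in t0..(t0 + δ), C := hmono
    _ = (t0 + δ - t0) • C := intervalIntegral.integral_const C
    _ = C * δ := by rw [smul_eq_mul]; ring
    _ = ((l : ℝ) ^ ((1 : ℝ) / (2 * (m : ℝ) + 2)) * sΛ *
          (sMax A) ^ α * Ω0 ^ α + Ω1) * δ := by rw [hCdef]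
end

section
/- Homogeneity of the EDCHO error dynamics (Lemma: homo): Let m ≥ 1, D ∈ ℝ^{n×ℓ}, L > 0, let K_0,…,K_m ∈ ℝ^{ℓ×ℓ} be diagonal matrices with positive diagonal entries, and let η > 0. Suppose Ỹ_0, …, Ỹ_m : ℝ → ℝ^n are differentiable and satisfy, for all t: Ẏ̃_μ(t) = Ỹ_{μ+1}(t) − D K_μ ⌈Dᵀ Ỹ_0(t)⌋^{(m−μ)/(m+1)} for 0 ≤ μ ≤ m−1, and Ẏ̃_m(t) ∈ [−L, L]^n − D K_m · Sgn(Dᵀ Ỹ_0(t)) (i.e. Ẏ̃_m(t) = v(t) − D K_m w(t) with v(t) ∈ [−L,L]^n and w_e(t) ∈ Sgn((Dᵀ Ỹ_0(t))_e)). Define Ỹ'_μ(t') := η^{m−μ+1} Ỹ_μ(t'/η) for μ = 0,…,m. Then the functions Ỹ'_0, …, Ỹ'_m satisfy the same system: d Ỹ'_μ(t')/dt' = Ỹ'_{μ+1}(t') − D K_μ ⌈Dᵀ Ỹ'_0(t')⌋^{(m−μ)/(m+1)} for 0 ≤ μ ≤ m−1, and d Ỹ'_m(t')/dt' ∈ [−L,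 L]^n − D K_m · Sgn(Dᵀ Ỹ'_0(t')). -/
open Matrix Finset

/-- Set-valued sign: `Sgn(z) = {sign z}` for `z ≠ 0` and `Sgn(0) = [-1,1]`. -/
def SgnSet (z : ℝ) : Set ℝ := if z = 0 then Set.Icc (-1) 1 else {Real.sign z}

lemma sign_pos_mul {a : ℝ} (ha : 0 < a) (x : ℝ) : Real.sign (a * x) = Real.sign x := by
  rcases lt_trichotomy x 0 with h | h | h
  · rw [Real.sign_of_neg h, Real.sign_of_neg (mul_neg_of_pos_of_neg ha h)]
  · simp [h]
  · rw [Real.sign_of_pos h, Real.sign_of_pos (mul_pos ha h)]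

lemma spow_pos_mul {a : ℝ} (α : ℝ) (ha : 0 < a) (x : ℝ) :
    spow α (a * x) = a ^ α * spow α x := by
  unfold spow
  rw [abs_mul, abs_of_pos ha, Real.mul_rpow ha.le (abs_nonneg x), sign_pos_mul ha]
  ring

lemma sgnset_pos_mul {a : ℝ} (ha : 0 < a) (x : ℝ) : SgnSet (a * x) = SgnSet x := by
  unfold SgnSet
  rw [sign_pos_mul ha]
  simp [mul_eq_zero, ha.ne']

/-- Homogeneity of the EDCHO error dynamics, Lemma `homo`. -/
theorem stmt7 {n l : ℕ} (m : ℕ) (hm : 1 ≤ m) (D : Matrix (Fin n) (Fin l) ℝ)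
    (L : ℝ) (hL : 0 < L)
    (K : ℕ → Fin l → ℝ) (hK : ∀ μ ≤ m, ∀ e, 0 < K μ e)
    (η : ℝ) (hη : 0 < η)
    (Y : ℕ → ℝ → Fin n → ℝ)
    (hdyn : ∀ t : ℝ, ∀ μ < m, HasDerivAt (Y μ)
      (Y (μ + 1) t - D.mulVec (fun e => K μ e *
        spow (((m : ℝ) - μ) / ((m : ℝ) + 1)) ((Dᵀ.mulVec (Y 0 t)) e))) t)
    (hdynm : ∀ t : ℝ, ∃ v : Fin n → ℝ, ∃ w : Fin l → ℝ,
      (∀ i, v i ∈ Set.Icc (-L) L) ∧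
      (∀ e, w e ∈ SgnSet ((Dᵀ.mulVec (Y 0 t)) e)) ∧
      HasDerivAt (Y m) (v - D.mulVec (fun e => K m e * w e)) t)
    (Y' : ℕ → ℝ → Fin n → ℝ)
    (hY' : ∀ μ ≤ m, ∀ t' : ℝ, Y' μ t' = η ^ (m - μ + 1) • Y μ (t' / η)) :
    (∀ t' : ℝ, ∀ μ < m, HasDerivAt (Y' μ)
      (Y' (μ + 1) t' - D.mulVec (fun e => K μ e *
        spow (((m : ℝ) - μ) / ((m : ℝ) + 1)) ((Dᵀ.mulVec (Y' 0 t')) e))) t') ∧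
    (∀ t' : ℝ, ∃ v : Fin n → ℝ, ∃ w : Fin l → ℝ,
      (∀ i, v i ∈ Set.Icc (-L) L) ∧
      (∀ e, w e ∈ SgnSet ((Dᵀ.mulVec (Y' 0 t')) e)) ∧
      HasDerivAt (Y' m) (v - D.mulVec (fun e => K m e * w e)) t') := by
  have hη' : η ≠ 0 := hη.ne'
  have hpow : (0:ℝ) < η ^ (m + 1) := pow_pos hη _
  have hY0 : ∀ t' : ℝ, ∀ e, (Dᵀ.mulVec (Y' 0 t')) e
      = η ^ (m + 1) * (Dᵀ.mulVec (Y 0 (t' / η))) e := by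
    intro t' e
    rw [hY' 0 (Nat.zero_le m)]
    simp [Matrix.mulVec_smul]
  constructor
  · intro t' μ hμ
    have hμm : μ ≤ m := hμ.le
    have hfun : Y' μ = fun s => η ^ (m - μ + 1) • Y μ (s / η) := funext (hY' μ hμm)
    have hdiv : HasDerivAt (fun s : ℝ => s / η) (1 / η) t' := (hasDerivAt_id t').div_const η
    have hd := hdyn (t' / η) μ hμ
    have h2 : HasDerivAt (Y' μ) (η ^ (m - μ + 1) • (1 / η) •
        (Y (μ + 1) (t' / η) - D.mulVec (fun e => K μ e *
          spow (((m : ℝ) - μ) / ((m : ℝ) + 1)) ((Dᵀ.mulVec (Y 0 (t' / η))) e)))) t' := by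
      rw [hfun]
      exact (hd.scomp t' hdiv).const_smul (η ^ (m - μ + 1))
    convert h2 using 1
    rw [smul_smul]
    have hc : η ^ (m - μ + 1) * (1 / η) = η ^ (m - μ) := by
      rw [pow_succ]; field_simp
    rw [hc, smul_sub]
    have key : ((η : ℝ) ^ (m + 1)) ^ (((m : ℝ) - μ) / ((m : ℝ) + 1)) = η ^ (m - μ) := by
      rw [← Real.rpow_natCast η (m + 1), ← Real.rpow_mul hη.le]
      have hme : ((m + 1 : ℕ) : ℝ) * (((m : ℝ) - μ) / ((m : ℝ) + 1)) = ((m - μ : ℕ) : ℝ) := by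
        have h0 : (m : ℝ) + 1 ≠ 0 := by positivity
        rw [Nat.cast_add, Nat.cast_one, Nat.cast_sub hμm]
        field_simp
      rw [hme, Real.rpow_natCast]
    congr 1
    · rw [hY' (μ + 1) hμ]
      congr 2
      omega
    · have hvec : (fun e => K μ e *
          spow (((m : ℝ) - μ) / ((m : ℝ) + 1)) ((Dᵀ.mulVec (Y' 0 t')) e))
          = η ^ (m - μ) • (fun e => K μ e *
          spow (((m : ℝ) - μ) / ((m : ℝ) + 1)) ((Dᵀ.mulVec (Y 0 (t' / η))) e)) := by
        funext e
        rw [hY0 t' e, spow_pos_mul _ hpow]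
        simp [key]
        ring
      rw [hvec, Matrix.mulVec_smul]
  · intro t'
    obtain ⟨v, w, hv, hw, hd⟩ := hdynm (t' / η)
    refine ⟨v, w, hv, ?_, ?_⟩
    · intro e
      rw [hY0 t' e, sgnset_pos_mul hpow]
      exact hw e
    · have hfun : Y' m = fun s => η ^ (m - m + 1) • Y m (s / η) := funext (hY' m le_rfl)
      have hdiv : HasDerivAt (fun s : ℝ => s / η) (1 / η) t' := (hasDerivAt_id t').div_const η
      have h2 : HasDerivAt (fun s => η ^ (m - m + 1) • Y m (s / η)) (η ^ (m - m + 1) • (1 / η) •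
          (v - D.mulVec (fun e => K m e * w e))) t' := (hd.scomp t' hdiv).const_smul (η ^ (m - m + 1))
      rw [hfun]
      convert h2 using 1
      rw [smul_smul, Nat.sub_self]
      have : η ^ (0 + 1) * (1 / η) = 1 := by field_simp; simp
      rw [this, one_smul]
end

section
/- Lyapunov decay inequality for the first-order sliding dynamics (key inequality in the proof of Lemma: fo_contraction): Let D ∈ ℝ^{n×ℓ}, let 0 < α < 1, let λ̄ > 0, and let Λ ∈ ℝ^{ℓ×ℓ} be a diagonal matrix whose diagonal entries are all ≥ λ̄. Then for every ξ ∈ ℝ^n and every d ∈ ℝ^ℓ: ξᵀ( D d − D Λ ⌈Dᵀ ξ⌋^{α} ) ≤ −λ̄ ‖Dᵀ ξ‖^{α+1} + s_max(D) ‖ξ‖ ‖d‖. -/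
open Matrix Finset

lemma sq_vecNorm {k : ℕ} (x : Fin k → ℝ) : vecNorm x ^ 2 = ∑ i, x i ^ 2 :=
  Real.sq_sqrt (by positivity)

lemma dot_le_norms {k : ℕ} (x y : Fin k → ℝ) : x ⬝ᵥ y ≤ vecNorm x * vecNorm y :=
  Real.sum_mul_le_sqrt_mul_sqrt _ _ _

lemma vecNorm_eq_zero {k : ℕ} {x : Fin k → ℝ} (h : vecNorm x = 0) : x = 0 := by
  have h2 : ∑ i, x i ^ 2 = 0 := (Real.sqrt_eq_zero (by positivity)).mp h
  funext i
  have := (Finset.sum_eq_zero_iff_of_nonneg (fun i _ => sq_nonneg (x i))).mp h2 i (mem_univ i)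
  exact pow_eq_zero_iff (n := 2) (by norm_num) |>.mp this

lemma real_rpow_add_le {p a b : ℝ} (ha : 0 ≤ a) (hb : 0 ≤ b) (hp : 0 ≤ p) (hp1 : p ≤ 1) :
    (a + b) ^ p ≤ a ^ p + b ^ p := by
  lift a to NNReal using ha
  lift b to NNReal using hb
  exact_mod_cast NNReal.rpow_add_le_add_rpow a b hp hp1

lemma sum_rpow_le_s16 {ι : Type*} (s : Finset ι) (f : ι → ℝ) (hf : ∀ i, 0 ≤ f i)
    {p : ℝ} (hp : 0 < p) (hp1 : p ≤ 1) :
    (∑ i ∈ s, f i) ^ p ≤ ∑ i ∈ s, f i ^ p := by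
  induction s using Finset.cons_induction with
  | empty => simp [Real.zero_rpow hp.ne']
  | cons a s hi ih =>
    rw [Finset.sum_cons, Finset.sum_cons]
    calc (f a + ∑ i ∈ s, f i) ^ p ≤ f a ^ p + (∑ i ∈ s, f i) ^ p :=
          real_rpow_add_le (hf a) (Finset.sum_nonneg fun i _ => hf i) hp.le hp1
      _ ≤ f a ^ p + ∑ i ∈ s, f i ^ p := by linarith [ih]

lemma self_mul_spow {α : ℝ} (hα : 0 < α) (x : ℝ) : x * spow α x = |x| ^ (α + 1) := by
  unfold spow
  rcases lt_trichotomy x 0 with h | h | h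
  · rw [Real.sign_of_neg h, abs_of_neg h]
    rw [Real.rpow_add (by linarith), Real.rpow_one]
    ring
  · simp [h, Real.rpow_add, Real.zero_rpow (by linarith : α + 1 ≠ 0)]
  · rw [Real.sign_of_pos h, abs_of_pos h]
    rw [Real.rpow_add h, Real.rpow_one]
    ring

/-- Lyapunov decay inequality for the first-order sliding dynamics;
key inequality in the proof of Lemma `fo_contraction`. -/
theorem stmt16 {n l : ℕ} (D : Matrix (Fin n) (Fin l) ℝ)
    (α : ℝ) (hα0 : 0 < α) (hα1 : α < 1)
    (lb : ℝ) (hlb : 0 < lb) (Λ : Fin l → ℝ) (hΛ : ∀ e, lb ≤ Λ e)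
    (ξ : Fin n → ℝ) (d : Fin l → ℝ) :
    ξ ⬝ᵥ (D.mulVec d - D.mulVec (fun e => Λ e * spow α ((Dᵀ.mulVec ξ) e))) ≤
      -lb * vecNorm (Dᵀ.mulVec ξ) ^ (α + 1) + sMax D * vecNorm ξ * vecNorm d := by
  set y : Fin l → ℝ := Dᵀ.mulVec ξ with hy
  have hdot : ∀ w : Fin l → ℝ, ξ ⬝ᵥ D.mulVec w = y ⬝ᵥ w := by
    intro w
    rw [Matrix.dotProduct_mulVec, hy, Matrix.mulVec_transpose]
  rw [dotProduct_sub, hdot, hdot]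
  -- term 1
  have h1 : ξ ⬝ᵥ D.mulVec d ≤ sMax D * vecNorm ξ * vecNorm d := by
    calc ξ ⬝ᵥ D.mulVec d ≤ vecNorm ξ * vecNorm (D.mulVec d) := dot_le_norms _ _
      _ ≤ vecNorm ξ * (sMax D * vecNorm d) :=
          mul_le_mul_of_nonneg_left (vecNorm_mulVec_le D d) (vecNorm_nonneg ξ)
      _ = sMax D * vecNorm ξ * vecNorm d := by ring
  rw [← hdot d]
  -- term 2
  have h2 : lb * vecNorm y ^ (α + 1) ≤ y ⬝ᵥ (fun e => Λ e * spow α (y e)) := by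
    have hstep1 : vecNorm y ^ (α + 1) ≤ ∑ e, |y e| ^ (α + 1) := by
      have hS : (0:ℝ) ≤ ∑ e, y e ^ 2 := by positivity
      have hp : (0:ℝ) < (α + 1) / 2 := by linarith
      have hp1 : (α + 1) / 2 ≤ 1 := by linarith
      have e1 : vecNorm y ^ (α + 1) = (∑ e, y e ^ 2) ^ ((α + 1) / 2) := by
        rw [vecNorm, Real.sqrt_eq_rpow, ← Real.rpow_mul hS]
        congr 1; ring
      have e2 : ∀ e : Fin l, (y e ^ 2) ^ ((α + 1) / 2) = |y e| ^ (α + 1) := by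
        intro e
        rw [← sq_abs, ← Real.rpow_natCast |y e| 2, ← Real.rpow_mul (abs_nonneg _)]
        norm_num
        congr 1; ring
      calc vecNorm y ^ (α + 1) = (∑ e, y e ^ 2) ^ ((α + 1) / 2) := e1
        _ ≤ ∑ e, (y e ^ 2) ^ ((α + 1) / 2) :=
            sum_rpow_le_s16 _ _ (fun e => sq_nonneg _) hp hp1
        _ = ∑ e, |y e| ^ (α + 1) := Finset.sum_congr rfl fun e _ => e2 e
    calc lb * vecNorm y ^ (α + 1) ≤ lb * ∑ e, |y e| ^ (α + 1) :=
          mul_le_mul_of_nonneg_left hstep1 hlb.le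
      _ = ∑ e, lb * |y e| ^ (α + 1) := Finset.mul_sum _ _ _
      _ ≤ ∑ e, Λ e * |y e| ^ (α + 1) :=
          Finset.sum_le_sum fun e _ =>
            mul_le_mul_of_nonneg_right (hΛ e) (Real.rpow_nonneg (abs_nonneg _) _)
      _ = y ⬝ᵥ fun e => Λ e * spow α (y e) := by
          unfold dotProduct
          refine Finset.sum_congr rfl fun e _ => ?_
          rw [← self_mul_spow hα0 (y e)]; ring
  linarith
end
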